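/- arXiv:2506.12521 — 2 statements merged into one kernel-verified Lean document; each statement's English description precedes it below -/
import Mathlib

section
/- Let A be a C-hyperideal of a commutative multiplicative hyperring G and S an MCS of G with A ∩ S = ∅. Then A is a quasi S-primary hyperideal of G if and only if there exists t ∈ S such that for all u₁,…,u_k ∈ G, if u₁∘⋯∘u_k ⊆ A, then t∘u_j ⊆ rad(A) for some 1 ≤ j ≤ k. -/
open Set

/-- A commutative multiplicative hyperring: a commutative additive group with a
commutative, associative hyperoperation `hmul` satisfying `(-a)∘b = -(a∘b)`,
weak distributivity, and having an identity element `e` with `a ∈ e∘a`. -/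
class MulHyperring (G : Type*) extends AddCommGroup G where
  hmul : G → G → Set G
  hmul_nonempty : ∀ a b : G, (hmul a b).Nonempty
  hmul_comm : ∀ a b : G, hmul a b = hmul b a
  hmul_assoc : ∀ a b c : G, (⋃ x ∈ hmul a b, hmul x c) = ⋃ x ∈ hmul b c, hmul a x
  neg_hmul : ∀ a b : G, hmul (-a) b = (fun x => -x) '' (hmul a b)
  hmul_add : ∀ a b c : G,
    hmul a (b + c) ⊆ {x | ∃ u ∈ hmul a b, ∃ v ∈ hmul a c, x = u + v}
  e : G
  e_mem : ∀ a : G, a ∈ hmul e a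

namespace MulHyperring

variable {G : Type*} [MulHyperring G]

/-- Hyperproduct of an element with a set: `a ∘ B = ⋃ b ∈ B, a ∘ b`. -/
def smulSet (a : G) (B : Set G) : Set G := ⋃ b ∈ B, hmul a b

/-- Hyperproduct of two sets. -/
def setMul (A B : Set G) : Set G := ⋃ a ∈ A, ⋃ b ∈ B, hmul a b

/-- Hyperproduct `a₁ ∘ a₂ ∘ ⋯ ∘ aₙ` of a (nonempty) list of elements. -/
def hProd : List G → Set G
  | [] => ∅
  | [a] => {a}
  | a :: b :: l => smulSet a (hProd (b :: l))

/-- `aⁿ` as a hyperproduct. -/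
def hPow (a : G) (n : ℕ) : Set G := hProd (List.replicate n a)

/-- `A` is a hyperideal of `G`. -/
def IsHyperideal (A : Set G) : Prop :=
  A.Nonempty ∧ (∀ x ∈ A, ∀ y ∈ A, x - y ∈ A) ∧ ∀ r : G, ∀ x ∈ A, hmul r x ⊆ A

/-- `A` is a `C`-hyperideal: any finite hyperproduct meeting `A` is contained in `A`. -/
def IsCHyperideal (A : Set G) : Prop :=
  IsHyperideal A ∧ ∀ l : List G, l ≠ [] → (hProd l ∩ A).Nonempty → hProd l ⊆ A

/-- The radical of a (C-)hyperideal: `{a | aⁿ ⊆ A for some n ≥ 1}`. -/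
def rad (A : Set G) : Set G := {a | ∃ n : ℕ, 1 ≤ n ∧ hPow a n ⊆ A}

/-- The hyperideal generated by a set. -/
def idealGen (X : Set G) : Set G := ⋂₀ {A | IsHyperideal A ∧ X ⊆ A}

/-- The hyperideal product of two hyperideals. -/
def idealMul (A B : Set G) : Set G := idealGen (setMul A B)

/-- Multiplicative closed subset. -/
def IsMCS (S : Set G) : Prop :=
  e ∈ S ∧ ∀ s₁ ∈ S, ∀ s₂ ∈ S, (hmul s₁ s₂ ∩ S).Nonempty

/-- Prime hyperideal. -/
def IsPrime (P : Set G) : Prop :=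
  IsHyperideal P ∧ P ≠ univ ∧ ∀ x y : G, hmul x y ⊆ P → x ∈ P ∨ y ∈ P

/-- `S`-prime hyperideal. -/
def IsSPrime (S A : Set G) : Prop :=
  IsHyperideal A ∧ A ∩ S = ∅ ∧
    ∃ t ∈ S, ∀ u v : G, hmul u v ⊆ A → hmul t u ⊆ A ∨ hmul t v ⊆ A

/-- `S`-primary hyperideal. -/
def IsSPrimary (S A : Set G) : Prop :=
  IsHyperideal A ∧ A ∩ S = ∅ ∧
    ∃ t ∈ S, ∀ u v : G, hmul u v ⊆ A → hmul t u ⊆ A ∨ hmul t v ⊆ rad A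

/-- Quasi `S`-primary hyperideal. -/
def IsQuasiSPrimary (S A : Set G) : Prop :=
  IsHyperideal A ∧ A ∩ S = ∅ ∧
    ∃ t ∈ S, ∀ u v : G, hmul u v ⊆ A → hmul t u ⊆ rad A ∨ hmul t v ⊆ rad A

/-- Weakly quasi `S`-primary hyperideal. -/
def IsWeaklyQuasiSPrimary (S A : Set G) : Prop :=
  IsHyperideal A ∧ A ∩ S = ∅ ∧
    ∃ t ∈ S, ∀ u v : G, 0 ∉ hmul u v → hmul u v ⊆ A →
      hmul t u ⊆ rad A ∨ hmul t v ⊆ rad A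

/-- Strongly quasi `S`-primary hyperideal. -/
def IsStronglyQuasiSPrimary (S A : Set G) : Prop :=
  IsHyperideal A ∧ A ∩ S = ∅ ∧
    ∃ t ∈ S, ∀ u v : G, hmul u v ⊆ A →
      smulSet t (hPow u 2) ⊆ A ∨ hmul t v ⊆ rad A

/-- The residual `(B : x) = {y | y ∘ x ⊆ B}`. -/
def colon (B : Set G) (x : G) : Set G := {y | hmul y x ⊆ B}

end MulHyperring

/-!
The radical of a C-hyperideal inherits the quasi `S`-primary condition: if `u ∘ v ⊆ rad A`, one
element of `u ∘ v` has a power in `A`, so the C-property gives `uⁿ ∘ vⁿ ⊆ A` for a single `n`;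
and `t ∘ uⁿ ⊆ rad A` already forces `t ∘ u ⊆ rad A`, because `(t ∘ u)ⁿ ⊆ tⁿ ∘ uⁿ`.

For a product `u₁ ∘ ⋯ ∘ u_k ⊆ A` one then argues by induction on `k` with an extra factor
`s ∈ S` in front: if `s ∘ a ∘ P ⊆ rad A` and `t ∘ a ⊈ rad A`, then `t ∘ s ∘ P ⊆ rad A`, and `s` is
replaced by an element of `t ∘ s ∩ S`. When only `s ∘ a` is left, `t ∘ s ⊈ rad A` since `t ∘ s`
meets `S`, which avoids `rad A`.
-/

namespace List

lemma replicate_ne_nil_of_one_le {α : Type*} {a : α} {n : ℕ} (hn : 1 ≤ n) : replicate n a ≠ [] :=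
  (replicate_eq_nil_iff a).not.mpr (by omega)

lemma flatten_replicate_ne_nil {α : Type*} {l : List α} (hl : l ≠ []) {n : ℕ} (hn : 1 ≤ n) :
    (replicate n l).flatten ≠ [] := by
  simpa [hl] using Nat.one_le_iff_ne_zero.mp hn

lemma flatten_replicate_pair_perm {α : Type*} (n : ℕ) (a b : α) :
    (replicate n [a, b]).flatten ~ replicate n a ++ replicate n b := by
  induction n with
  | zero => simp
  | succ m ih =>
    rw [replicate_succ, flatten_cons, replicate_succ, replicate_succ]
    exact (ih.cons b).trans perm_middle.symm |>.cons a

end List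

namespace MulHyperring

open List

variable {G : Type*} [MulHyperring G]

section Products

lemma mem_smulSet {a y : G} {X : Set G} : y ∈ smulSet a X ↔ ∃ x ∈ X, y ∈ hmul a x := by
  simp [smulSet]

lemma smulSet_subset_iff {a : G} {X Z : Set G} :
    smulSet a X ⊆ Z ↔ ∀ x ∈ X, hmul a x ⊆ Z := by
  simp [smulSet]

lemma hmul_subset_smulSet {a x : G} {X : Set G} (hx : x ∈ X) : hmul a x ⊆ smulSet a X :=
  fun _ hw => mem_smulSet.mpr ⟨x, hx, hw⟩

lemma smulSet_singleton (a b : G) : smulSet a {b} = hmul a b := by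
  simp [smulSet]

lemma smulSet_hmul_rotate (a b c : G) : smulSet a (hmul b c) = smulSet c (hmul a b) := by
  rw [smulSet, ← hmul_assoc]
  simp only [smulSet, hmul_comm _ c]

lemma smulSet_hmul_left_comm (a b c : G) : smulSet a (hmul b c) = smulSet b (hmul a c) := by
  rw [smulSet_hmul_rotate, smulSet_hmul_rotate b, hmul_comm b]

lemma smulSet_smulSet (a b : G) (X : Set G) :
    smulSet a (smulSet b X) = ⋃ x ∈ X, smulSet a (hmul b x) := by
  ext w
  simp only [mem_smulSet, mem_iUnion, exists_prop]
  grind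

lemma smulSet_smulSet_comm (a b : G) (X : Set G) :
    smulSet a (smulSet b X) = smulSet b (smulSet a X) := by
  simp only [smulSet_smulSet, smulSet_hmul_left_comm a b]

lemma mem_setMul {X Y : Set G} {w : G} :
    w ∈ setMul X Y ↔ ∃ x ∈ X, ∃ y ∈ Y, w ∈ hmul x y := by
  simp [setMul]

lemma smulSet_setMul (a : G) (X Y : Set G) :
    smulSet a (setMul X Y) = setMul (smulSet a X) Y := by
  ext w
  simp only [mem_smulSet, mem_setMul]
  constructor
  · rintro ⟨z, ⟨x, hx, y, hy, hz⟩, hw⟩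
    have : w ∈ smulSet y (hmul a x) := smulSet_hmul_rotate a x y ▸ mem_smulSet.mpr ⟨z, hz, hw⟩
    obtain ⟨v, hv, hwv⟩ := mem_smulSet.mp this
    exact ⟨v, ⟨x, hx, hv⟩, y, hy, hmul_comm v y ▸ hwv⟩
  · rintro ⟨v, ⟨x, hx, hv⟩, y, hy, hw⟩
    have : w ∈ smulSet a (hmul x y) :=
      (smulSet_hmul_rotate a x y).symm ▸ mem_smulSet.mpr ⟨v, hv, hmul_comm v y ▸ hw⟩
    obtain ⟨z, hz, hwz⟩ := mem_smulSet.mp this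
    exact ⟨z, ⟨x, hx, y, hy, hz⟩, hwz⟩

lemma setMul_singleton (a : G) (Y : Set G) : setMul {a} Y = smulSet a Y := by
  ext w; simp [mem_setMul, mem_smulSet]

lemma hProd_singleton (a : G) : hProd [a] = {a} := rfl

lemma hProd_cons {l : List G} (hl : l ≠ []) (a : G) : hProd (a :: l) = smulSet a (hProd l) := by
  cases l with
  | nil => exact absurd rfl hl
  | cons b m => rfl

lemma hProd_pair (u v : G) : hProd [u, v] = hmul u v := by
  rw [hProd_cons (cons_ne_nil v []), hProd_singleton, smulSet_singleton]

lemma hProd_nonempty {l : List G} (hl : l ≠ []) : (hProd l).Nonempty := by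
  induction l with
  | nil => exact absurd rfl hl
  | cons a m ih =>
    rcases eq_or_ne m [] with rfl | hm
    · exact ⟨a, rfl⟩
    · obtain ⟨x, hx⟩ := ih hm
      obtain ⟨y, hy⟩ := hmul_nonempty a x
      exact ⟨y, hProd_cons hm a ▸ hmul_subset_smulSet hx hy⟩

lemma hProd_perm {l l' : List G} (h : l ~ l') : hProd l = hProd l' := by
  induction h with
  | nil => rfl
  | @cons a l₁ l₂ h ih =>
    rcases eq_or_ne l₁ [] with rfl | h₁
    · rw [← h.nil_eq]
    · rw [hProd_cons h₁, hProd_cons (by rintro rfl; exact h₁ h.eq_nil), ih]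
  | swap x y l =>
    rcases eq_or_ne l [] with rfl | hl
    · rw [hProd_pair, hProd_pair, hmul_comm]
    · rw [hProd_cons (cons_ne_nil _ _), hProd_cons (cons_ne_nil _ _), hProd_cons hl,
        hProd_cons hl, smulSet_smulSet_comm]
  | trans _ _ ih₁ ih₂ => exact ih₁.trans ih₂

lemma hProd_append {l₁ l₂ : List G} (h₁ : l₁ ≠ []) (h₂ : l₂ ≠ []) :
    hProd (l₁ ++ l₂) = setMul (hProd l₁) (hProd l₂) := by
  induction l₁ with
  | nil => exact absurd rfl h₁
  | cons a m ih =>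
    rcases eq_or_ne m [] with rfl | hm
    · rw [singleton_append, hProd_cons h₂, hProd_singleton, setMul_singleton]
    · rw [cons_append, hProd_cons (append_ne_nil_of_left_ne_nil hm _), ih hm, hProd_cons hm,
        smulSet_setMul]

lemma hPow_one (a : G) : hPow a 1 = {a} := rfl

lemma hPow_succ (a : G) {n : ℕ} (hn : 1 ≤ n) : hPow a (n + 1) = smulSet a (hPow a n) :=
  hProd_cons (replicate_ne_nil_of_one_le hn) a

lemma hPow_nonempty (a : G) {n : ℕ} (hn : 1 ≤ n) : (hPow a n).Nonempty :=
  hProd_nonempty (replicate_ne_nil_of_one_le hn)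

lemma hPow_subset_hProd_flatten {z : G} {l : List G} (hz : z ∈ hProd l) (hl : l ≠ [])
    {n : ℕ} (hn : 1 ≤ n) : hPow z n ⊆ hProd (replicate n l).flatten := by
  induction n, hn using Nat.le_induction with
  | base => simpa [hPow_one] using hz
  | succ m hm ih =>
    rw [hPow_succ z hm, replicate_succ, flatten_cons,
      hProd_append hl (flatten_replicate_ne_nil hl hm), ← setMul_singleton]
    intro w hw
    obtain ⟨z', rfl, y, hy, hw⟩ := mem_setMul.mp hw
    exact mem_setMul.mpr ⟨z', hz, y, ih hy, hw⟩

lemma hProd_subset_of_sublist {B : Set G} (hB : ∀ r, ∀ x ∈ B, hmul r x ⊆ B) {l l' : List G}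
    (hl : l ≠ []) (h : l <+ l') (hlB : hProd l ⊆ B) : hProd l' ⊆ B := by
  obtain ⟨r, hr⟩ := h.exists_perm_append
  rw [hProd_perm hr]
  rcases eq_or_ne r [] with rfl | hr'
  · simpa using hlB
  rw [hProd_append hl hr']
  intro w hw
  obtain ⟨x, hx, y, -, hw⟩ := mem_setMul.mp hw
  exact hB y x (hlB hx) (hmul_comm x y ▸ hw)

end Products

section Radical

variable {A S : Set G}

lemma subset_rad : A ⊆ rad A :=
  fun _ ha => ⟨1, le_rfl, by simpa [hPow_one] using ha⟩

lemma IsCHyperideal.hProd_flatten_replicate_subset (hA : IsCHyperideal A) {z : G} {l : List G}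
    (hz : z ∈ hProd l) (hl : l ≠ []) {n : ℕ} (hn : 1 ≤ n) (hzA : hPow z n ⊆ A) :
    hProd (replicate n l).flatten ⊆ A := by
  obtain ⟨y, hy⟩ := hPow_nonempty z hn
  exact hA.2 _ (flatten_replicate_ne_nil hl hn) ⟨y, hPow_subset_hProd_flatten hz hl hn hy, hzA hy⟩

lemma IsCHyperideal.mem_rad_of_mem_hPow (hA : IsCHyperideal A) {w z : G} {n : ℕ} (hn : 1 ≤ n)
    (hz : z ∈ hPow w n) (hzA : z ∈ rad A) : w ∈ rad A := by
  obtain ⟨m, hm, hzm⟩ := hzA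
  have h := hA.hProd_flatten_replicate_subset hz (replicate_ne_nil_of_one_le hn) hm hzm
  rw [flatten_replicate_replicate] at h
  exact ⟨m * n, Nat.mul_pos hm hn, h⟩

lemma IsCHyperideal.hmul_subset_rad (hA : IsCHyperideal A) {x : G} (hx : x ∈ rad A) (r : G) :
    hmul r x ⊆ rad A := by
  obtain ⟨n, hn, hxn⟩ := hx
  intro w hw
  refine ⟨n, hn, (hPow_subset_hProd_flatten (hProd_pair r x ▸ hw) (cons_ne_nil _ _) hn).trans ?_⟩
  rw [hProd_perm (flatten_replicate_pair_perm n r x)]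
  exact hProd_subset_of_sublist hA.1.2.2 (replicate_ne_nil_of_one_le hn)
    (sublist_append_right _ _) hxn

lemma IsCHyperideal.hmul_subset_rad_of_smulSet_hPow (hA : IsCHyperideal A) {t u : G} {n : ℕ}
    (hn : 1 ≤ n) (h : smulSet t (hPow u n) ⊆ rad A) : hmul t u ⊆ rad A := by
  intro w hw
  have hwn : hPow w n ⊆ rad A := by
    refine (hPow_subset_hProd_flatten (hProd_pair t u ▸ hw) (cons_ne_nil _ _) hn).trans ?_
    rw [hProd_perm (flatten_replicate_pair_perm n t u)]
    refine hProd_subset_of_sublist (fun r x hx => hA.hmul_subset_rad hx r)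
      (cons_ne_nil t (replicate n u)) ?_ (by rwa [hProd_cons (replicate_ne_nil_of_one_le hn)])
    obtain ⟨m, rfl⟩ : ∃ m, n = m + 1 := ⟨n - 1, by omega⟩
    rw [replicate_succ (a := t), cons_append]
    exact (sublist_append_right _ _).cons_cons t
  obtain ⟨y, hy⟩ := hPow_nonempty w hn
  exact hA.mem_rad_of_mem_hPow hn hy (hwn hy)

lemma IsCHyperideal.hmul_subset_rad_or_of_hmul_subset_rad (hA : IsCHyperideal A) {t : G}
    (H : ∀ u v : G, hmul u v ⊆ A → hmul t u ⊆ rad A ∨ hmul t v ⊆ rad A)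
    {u v : G} (huv : hmul u v ⊆ rad A) : hmul t u ⊆ rad A ∨ hmul t v ⊆ rad A := by
  obtain ⟨z, hz⟩ := hmul_nonempty u v
  obtain ⟨n, hn, hzn⟩ := huv hz
  have hpow : ∀ p ∈ hPow u n, ∀ q ∈ hPow v n, hmul p q ⊆ A := by
    intro p hp q hq w hw
    have h := hA.hProd_flatten_replicate_subset (hProd_pair u v ▸ hz) (cons_ne_nil _ _) hn hzn
    rw [hProd_perm (flatten_replicate_pair_perm n u v),
      hProd_append (replicate_ne_nil_of_one_le hn) (replicate_ne_nil_of_one_le hn)] at h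
    exact h (mem_setMul.mpr ⟨p, hp, q, hq, hw⟩)
  by_cases hu : ∀ p ∈ hPow u n, hmul t p ⊆ rad A
  · exact Or.inl (hA.hmul_subset_rad_of_smulSet_hPow hn (smulSet_subset_iff.mpr hu))
  push Not at hu
  obtain ⟨p, hp, htp⟩ := hu
  refine Or.inr (hA.hmul_subset_rad_of_smulSet_hPow hn (smulSet_subset_iff.mpr fun q hq => ?_))
  exact (H p q (hpow p hp q hq)).resolve_left htp

lemma IsMCS.hPow_inter_nonempty (hS : IsMCS S) {s : G} (hs : s ∈ S) {n : ℕ} (hn : 1 ≤ n) :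
    (hPow s n ∩ S).Nonempty := by
  induction n, hn using Nat.le_induction with
  | base => exact ⟨s, rfl, hs⟩
  | succ m hm ih =>
    obtain ⟨x, hx, hxS⟩ := ih
    obtain ⟨y, hy, hyS⟩ := hS.2 s hs x hxS
    exact ⟨y, hPow_succ s hm ▸ hmul_subset_smulSet hx hy, hyS⟩

lemma IsMCS.rad_inter_eq_empty (hS : IsMCS S) (hAS : A ∩ S = ∅) : rad A ∩ S = ∅ := by
  refine eq_empty_of_forall_notMem fun s ⟨⟨n, hn, hsn⟩, hs⟩ => ?_
  obtain ⟨x, hx, hxS⟩ := hS.hPow_inter_nonempty hs hn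
  exact hAS.subset ⟨hsn hx, hxS⟩

lemma IsMCS.not_hmul_subset (hS : IsMCS S) {B : Set G} (hBS : B ∩ S = ∅) {s₁ s₂ : G}
    (h₁ : s₁ ∈ S) (h₂ : s₂ ∈ S) : ¬ hmul s₁ s₂ ⊆ B := by
  intro h
  obtain ⟨x, hx, hxS⟩ := hS.2 s₁ h₁ s₂ h₂
  exact hBS.subset ⟨h hx, hxS⟩

lemma exists_mem_hmul_subset_rad_of_hProd_cons_subset (hA : IsCHyperideal A) (hS : IsMCS S)
    (hAS : A ∩ S = ∅) {t : G} (ht : t ∈ S)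
    (H : ∀ u v : G, hmul u v ⊆ A → hmul t u ⊆ rad A ∨ hmul t v ⊆ rad A)
    {l : List G} (hl : l ≠ []) {s : G} (hs : s ∈ S) (h : hProd (s :: l) ⊆ rad A) :
    ∃ u ∈ l, hmul t u ⊆ rad A := by
  induction l generalizing s with
  | nil => exact absurd rfl hl
  | cons a l ih =>
    have hts : ¬ hmul t s ⊆ rad A := hS.not_hmul_subset (hS.rad_inter_eq_empty hAS) ht hs
    rcases eq_or_ne l [] with rfl | hl'
    · rw [hProd_pair] at h
      exact ⟨a, mem_singleton_self a,
        (hA.hmul_subset_rad_or_of_hmul_subset_rad H h).resolve_left hts⟩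
    by_cases hta : hmul t a ⊆ rad A
    · exact ⟨a, mem_cons_self, hta⟩
    have hsl : ∀ x ∈ hProd (s :: l), hmul t x ⊆ rad A := by
      intro x hx
      refine (hA.hmul_subset_rad_or_of_hmul_subset_rad H (subset_trans ?_ h)).resolve_left hta
      rw [hProd_perm (Perm.swap a s l), hProd_cons (cons_ne_nil s l)]
      exact hmul_subset_smulSet hx
    obtain ⟨s', hs't, hs'S⟩ := hS.2 t ht s hs
    have hs'l : hProd (s' :: l) ⊆ rad A := by
      intro w hw
      obtain ⟨p, hp, hwp⟩ := mem_smulSet.mp (hProd_cons hl' s' ▸ hw)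
      have hw' : w ∈ hProd ([t, s] ++ l) := by
        rw [hProd_append (cons_ne_nil _ _) hl', hProd_pair]
        exact mem_setMul.mpr ⟨s', hs't, p, hp, hwp⟩
      rw [cons_append, singleton_append, hProd_cons (cons_ne_nil s l)] at hw'
      exact smulSet_subset_iff.mpr hsl hw'
    obtain ⟨u, hu, htu⟩ := ih hl' hs'S hs'l
    exact ⟨u, mem_cons_of_mem a hu, htu⟩

end Radical

end MulHyperring

open MulHyperring in
theorem quasiSPrimary_iff_finite_products {G : Type*} [MulHyperring G] (A S : Set G) (hA : IsCHyperideal A)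
    (hS : IsMCS S) (hAS : A ∩ S = ∅) :
    IsQuasiSPrimary S A ↔
      ∃ t ∈ S, ∀ l : List G, l ≠ [] → hProd l ⊆ A → ∃ u ∈ l, hmul t u ⊆ rad A := by
  constructor
  · rintro ⟨-, -, t, ht, H⟩
    refine ⟨t, ht, fun l hl hlA =>
      exists_mem_hmul_subset_rad_of_hProd_cons_subset hA hS hAS ht H hl ht ?_⟩
    rw [hProd_cons hl]
    exact smulSet_subset_iff.mpr fun x hx => (hA.1.2.2 t x (hlA hx)).trans subset_rad
  · rintro ⟨t, ht, H⟩
    refine ⟨hA.1, hAS, t, ht, fun u v huv => ?_⟩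
    obtain ⟨w, hw, htw⟩ := H [u, v] (List.cons_ne_nil _ _) (hProd_pair u v ▸ huv)
    rcases List.mem_pair.mp hw with rfl | rfl
    exacts [Or.inl htw, Or.inr htw]
end

section
/- Let G₁, G₂ be commutative multiplicative hyperrings, η : G₁ → G₂ a surjective hyperring good homomorphism, A₁ a C-hyperideal of G₁ with Ker(η) ⊆ A₁, and S an MCS of G₁ with 0 ∉ η(S). If A₁ is a quasi S-primary hyperideal of G₁, then η(A₁) is a quasi η(S)-primary hyperideal of G₂. -/
open Set

namespace MulHyperring

/-- A hyperring good homomorphism. -/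
structure IsGoodHom {G₁ G₂ : Type*} [MulHyperring G₁] [MulHyperring G₂]
    (η : G₁ → G₂) : Prop where
  map_add : ∀ a b : G₁, η (a + b) = η a + η b
  map_hmul : ∀ a b : G₁, η '' (hmul a b) = hmul (η a) (η b)
  map_e : η (e : G₁) = (e : G₂)

end MulHyperring

/-!
Because `Ker η ⊆ A₁` and `A₁` is closed under subtraction, `A₁` is saturated for `η`, i.e.
`η⁻¹(η(A₁)) = A₁`. Surjectivity lets every `u ∘ v ⊆ η(A₁)` in `G₂` be pulled back to
`u₁ ∘ v₁ ⊆ A₁` in `G₁`, where the quasi `S`-primary condition applies with some `t ∈ S`; since a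
good homomorphism maps hyperproducts onto hyperproducts, `η` carries radicals into radicals and the
conclusion is pushed forward with the witness `η t`. Saturation also keeps `η(A₁)` disjoint
from `η(S)`.
-/

namespace MulHyperring

section Hyperideal

variable {G : Type*} [MulHyperring G] {A : Set G}

theorem IsHyperideal.zero_mem (hA : IsHyperideal A) : (0 : G) ∈ A := by
  obtain ⟨⟨a, ha⟩, hsub, -⟩ := hA
  simpa using hsub a ha a ha

theorem IsHyperideal.mem_of_sub_mem (hA : IsHyperideal A) {x a : G} (hxa : x - a ∈ A)
    (ha : a ∈ A) : x ∈ A := by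
  have hna : -a ∈ A := by simpa using hA.2.1 0 hA.zero_mem a ha
  simpa using hA.2.1 (x - a) hxa (-a) hna

end Hyperideal

namespace IsGoodHom

variable {G₁ G₂ : Type*} [MulHyperring G₁] [MulHyperring G₂] {η : G₁ → G₂}

theorem map_zero (hη : IsGoodHom η) : η 0 = 0 :=
  add_left_cancel (a := η 0) (by rw [add_zero, ← hη.map_add, add_zero])

theorem map_neg (hη : IsGoodHom η) (a : G₁) : η (-a) = -η a :=
  eq_neg_of_add_eq_zero_left (by rw [← hη.map_add, neg_add_cancel, hη.map_zero])

theorem map_sub (hη : IsGoodHom η) (a b : G₁) : η (a - b) = η a - η b := by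
  rw [sub_eq_add_neg, hη.map_add, hη.map_neg, sub_eq_add_neg]

theorem image_smulSet (hη : IsGoodHom η) (a : G₁) (B : Set G₁) :
    η '' smulSet a B = smulSet (η a) (η '' B) := by
  simp only [smulSet, image_iUnion₂, biUnion_image, hη.map_hmul]

theorem image_hProd (hη : IsGoodHom η) : ∀ l : List G₁, η '' hProd l = hProd (l.map η)
  | [] => by simp [hProd]
  | [a] => by simp [hProd]
  | a :: b :: l => by
    rw [List.map_cons, List.map_cons]
    show η '' smulSet a (hProd (b :: l)) = smulSet (η a) (hProd (η b :: l.map η))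
    rw [hη.image_smulSet, hη.image_hProd (b :: l), List.map_cons]

theorem image_hPow (hη : IsGoodHom η) (a : G₁) (n : ℕ) : η '' hPow a n = hPow (η a) n := by
  rw [hPow, hPow, hη.image_hProd, List.map_replicate]

theorem image_rad_subset (hη : IsGoodHom η) (A : Set G₁) : η '' rad A ⊆ rad (η '' A) := by
  rintro _ ⟨a, ⟨n, hn, ha⟩, rfl⟩
  exact ⟨n, hn, hη.image_hPow a n ▸ image_mono ha⟩

theorem hmul_subset_rad_image (hη : IsGoodHom η) {A : Set G₁} {a b : G₁}
    (hab : hmul a b ⊆ rad A) : hmul (η a) (η b) ⊆ rad (η '' A) :=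
  hη.map_hmul a b ▸ (image_mono hab).trans (hη.image_rad_subset A)

theorem preimage_image_eq_of_ker_subset (hη : IsGoodHom η) {A : Set G₁} (hA : IsHyperideal A)
    (hker : {x : G₁ | η x = 0} ⊆ A) : η ⁻¹' (η '' A) = A := by
  refine (subset_preimage_image η A).antisymm' ?_
  rintro x ⟨a, ha, hax⟩
  exact hA.mem_of_sub_mem (hker (by simp [hη.map_sub, hax])) ha

theorem isHyperideal_image (hη : IsGoodHom η) (hsurj : Function.Surjective η) {A : Set G₁}
    (hA : IsHyperideal A) : IsHyperideal (η '' A) := by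
  obtain ⟨hne, hsub, habs⟩ := hA
  refine ⟨hne.image η, ?_, ?_⟩
  · rintro _ ⟨x, hx, rfl⟩ _ ⟨y, hy, rfl⟩
    exact ⟨x - y, hsub x hx y hy, hη.map_sub x y⟩
  · rintro r _ ⟨x, hx, rfl⟩
    obtain ⟨r, rfl⟩ := hsurj r
    exact hη.map_hmul r x ▸ image_mono (habs r x hx)

end IsGoodHom

end MulHyperring

open MulHyperring in
theorem quasiSPrimary_image_general {G₁ G₂ : Type*} [MulHyperring G₁] [MulHyperring G₂]
    (η : G₁ → G₂) (hη : IsGoodHom η) (hsurj : Function.Surjective η)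
    (A₁ : Set G₁) (hker : {x : G₁ | η x = 0} ⊆ A₁)
    (S : Set G₁)
    (h : IsQuasiSPrimary S A₁) :
    IsQuasiSPrimary (η '' S) (η '' A₁) := by
  obtain ⟨hA₁, hdisj, t, htS, ht⟩ := h
  have hsat : η ⁻¹' (η '' A₁) = A₁ := hη.preimage_image_eq_of_ker_subset hA₁ hker
  refine ⟨hη.isHyperideal_image hsurj hA₁, ?_, η t, mem_image_of_mem η htS, ?_⟩
  · rw [inter_comm, ← image_inter_preimage, hsat, inter_comm, hdisj, image_empty]
  · intro u v huv
    obtain ⟨u, rfl⟩ := hsurj u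
    obtain ⟨v, rfl⟩ := hsurj v
    have huvA₁ : hmul u v ⊆ A₁ := by
      rwa [← hη.map_hmul, image_subset_iff, hsat] at huv
    exact (ht u v huvA₁).imp hη.hmul_subset_rad_image hη.hmul_subset_rad_image

open MulHyperring in
theorem quasiSPrimary_image {G₁ G₂ : Type*} [MulHyperring G₁] [MulHyperring G₂]
    (η : G₁ → G₂) (hη : IsGoodHom η) (hsurj : Function.Surjective η)
    (A₁ : Set G₁) (hA₁ : IsCHyperideal A₁) (hker : {x : G₁ | η x = 0} ⊆ A₁)
    (S : Set G₁) (hS : IsMCS S) (h0 : (0 : G₂) ∉ η '' S)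
    (h : IsQuasiSPrimary S A₁) :
    IsQuasiSPrimary (η '' S) (η '' A₁) :=
  quasiSPrimary_image_general η hη hsurj A₁ hker S h
end
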